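/- If X is a connected non-bipartite graph and Y is any connected graph, then the categorical product X × Y is connected. -/

import Mathlib

/-- The categorical (tensor) product of simple graphs. -/
def tensorProd {α β : Type*} (G : SimpleGraph α) (H : SimpleGraph β) :
    SimpleGraph (α × β) where
  Adj p q := G.Adj p.1 q.1 ∧ H.Adj p.2 q.2
  symm := ⟨fun _ _ h => ⟨h.1.symm, h.2.symm⟩⟩
  loopless := ⟨fun p h => G.loopless.irrefl p.1 h.1⟩

/-!
Walks of equal length in the two factors run in lockstep to a walk in `X × Y`. A connected
graph with an odd closed walk has walks of both parities between any two vertices, and in a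
graph without isolated vertices a walk can be lengthened by two by stepping to a neighbour
and back. So for any two vertices of `X × Y` one finds walks of equal length in both factors.
-/

namespace SimpleGraph

variable {α β : Type*} {G : SimpleGraph α} {H : SimpleGraph β}

theorem Walk.exists_length_eq_add_two_mul (hG : ∀ v, ∃ w, G.Adj v w) {u v : α}
    (p : G.Walk u v) (k : ℕ) : ∃ p' : G.Walk u v, p'.length = p.length + 2 * k := by
  induction k with
  | zero => exact ⟨p, rfl⟩
  | succ k ih =>
    obtain ⟨p', hp'⟩ := ih
    obtain ⟨w, huw⟩ := hG u
    exact ⟨.cons huw (.cons huw.symm p'), by simp only [Walk.length_cons, hp']; ring⟩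

theorem Preconnected.exists_walk_length_mod_two_eq (hG : G.Preconnected) {u : α}
    (c : G.Walk u u) (hc : Odd c.length) (a a' : α) (r : ℕ) :
    ∃ p : G.Walk a a', p.length % 2 = r % 2 := by
  obtain ⟨p₁⟩ := hG a u
  obtain ⟨p₂⟩ := hG u a'
  by_cases hpar : (p₁.append p₂).length % 2 = r % 2
  · exact ⟨p₁.append p₂, hpar⟩
  · refine ⟨p₁.append (c.append p₂), ?_⟩
    simp only [Walk.length_append] at hpar ⊢
    obtain ⟨k, hk⟩ := hc
    omega

theorem tensorProd_reachable_of_length_eq {a a' : α} {b b' : β} (p : G.Walk a a')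
    (q : H.Walk b b') (h : p.length = q.length) : (tensorProd G H).Reachable (a, b) (a', b') := by
  induction p generalizing b with
  | nil => rw [Walk.eq_of_length_eq_zero h.symm]
  | cons hG p ih =>
    cases q with
    | nil => simp at h
    | cons hH q =>
      exact (Adj.reachable (G := tensorProd G H) ⟨hG, hH⟩).trans (ih q (by simpa using h))

theorem tensorProd_reachable_of_length_mod_two_eq (hG : ∀ v, ∃ w, G.Adj v w)
    (hH : ∀ v, ∃ w, H.Adj v w) {a a' : α} {b b' : β} (p : G.Walk a a') (q : H.Walk b b')
    (h : p.length % 2 = q.length % 2) : (tensorProd G H).Reachable (a, b) (a', b') := by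
  rcases le_total p.length q.length with hle | hle
  · obtain ⟨p', hp'⟩ := p.exists_length_eq_add_two_mul hG ((q.length - p.length) / 2)
    exact tensorProd_reachable_of_length_eq p' q (by omega)
  · obtain ⟨q', hq'⟩ := q.exists_length_eq_add_two_mul hH ((p.length - q.length) / 2)
    exact tensorProd_reachable_of_length_eq p q' (by omega)

end SimpleGraph

open SimpleGraph

theorem tensorProd_connected_of_nonbipartite_general
    {α β : Type*} (G : SimpleGraph α) (H : SimpleGraph β)
    (hGconn : G.Connected) (hGnb : ¬ G.Colorable 2)
    (hHconn : H.Connected)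
    (hHdeg : ∀ b : β, ∃ b' : β, H.Adj b b') :
    (tensorProd G H).Connected := by
  obtain ⟨u, c, hc⟩ : ∃ u, ∃ c : G.Walk u u, Odd c.length := by
    simpa [two_colorable_iff_forall_loop_even] using hGnb
  have : Nontrivial α := ⟨⟨u, c.snd, (c.adj_snd (Walk.not_nil_iff_lt_length.mpr hc.pos)).ne⟩⟩
  have hGdeg := hGconn.preconnected.exists_adj_of_nontrivial
  have := hGconn.nonempty
  have := hHconn.nonempty
  refine ⟨fun ⟨a, b⟩ ⟨a', b'⟩ => ?_⟩
  obtain ⟨q⟩ := hHconn.preconnected b b'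
  obtain ⟨p, hp⟩ := hGconn.preconnected.exists_walk_length_mod_two_eq c hc a a' q.length
  exact tensorProd_reachable_of_length_mod_two_eq hGdeg hHdeg p q hp

/-- If `X` is connected and non-bipartite and `Y` is connected (with every
vertex having a neighbor), then `X × Y` is connected. -/
theorem tensorProd_connected_of_nonbipartite
    {α β : Type*} (G : SimpleGraph α) (H : SimpleGraph β)
    (hGconn : G.Connected) (hGnb : ¬ G.Colorable 2)
    (hHconn : H.Connected)
    (hGdeg : ∀ a : α, ∃ a' : α, G.Adj a a')
    (hHdeg : ∀ b : β, ∃ b' : β, H.Adj b b') :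
    (tensorProd G H).Connected :=
  tensorProd_connected_of_nonbipartite_general G H hGconn hGnb hHconn hHdeg
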